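/- Let I be a finite nonempty set, V : I → ℝ^d value vectors, and z : I → ℝ logits. Define the attention output O(z) = Σ_{u ∈ I} softmax(z)(u) • V u. If t ∈ I, I \ {t} is nonempty, and other logits are fixed, then as z t → -∞, O(z) converges to Σ_{u ∈ I \ {t}} softmax restricted to I \ {t} applied at u, scaled by V u. That is, the attention output with t masked equals the attention output computed without t in the limit. -/

import Mathlib

open Real Filter Finset Topology

/-!
The normalized weighted sum `∑ u, (w u / ∑ v, w v) • V u` is continuous in the weights `w` wherever
the total weight is nonzero. As `z t → -∞` the unnormalized weight `exp (z t)` tends to `0` while the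
others stay fixed, so the attention output tends to the weighted sum for the weights with a zero at
`t`, which is the attention output over `I \ {t}`.
-/

section WeightedAverage

variable {ι 𝕜 E : Type*} [Fintype ι] [Field 𝕜] [AddCommMonoid E] [Module 𝕜 E]

def weightedAverage (w : ι → 𝕜) (V : ι → E) : E :=
  ∑ u, (w u / ∑ v, w v) • V u

theorem sum_update_zero [DecidableEq ι] (c : ι → 𝕜) (t : ι) :
    ∑ v, Function.update c t 0 v = ∑ v ∈ univ.erase t, c v := by
  rw [sum_update_of_mem (mem_univ t), zero_add, sdiff_singleton_eq_erase]

theorem weightedAverage_update_zero [DecidableEq ι] (c : ι → 𝕜) (t : ι) (V : ι → E) :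
    weightedAverage (Function.update c t 0) V =
      ∑ u ∈ univ.erase t, (c u / ∑ v ∈ univ.erase t, c v) • V u := by
  rw [weightedAverage, sum_update_zero, ← add_sum_erase _ _ (mem_univ t)]
  simp only [Function.update_self, zero_div, zero_smul, zero_add]
  exact sum_congr rfl fun u hu => by rw [Function.update_of_ne (ne_of_mem_erase hu)]

variable [TopologicalSpace 𝕜] [IsTopologicalDivisionRing 𝕜] [TopologicalSpace E] [ContinuousAdd E]
  [ContinuousSMul 𝕜 E]

theorem continuousAt_weightedAverage {w : ι → 𝕜} (hw : ∑ v, w v ≠ 0) (V : ι → E) :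
    ContinuousAt (fun w => weightedAverage w V) w := by
  have hsum : ContinuousAt (fun w : ι → 𝕜 => ∑ v, w v) w := by fun_prop
  exact tendsto_finsetSum _ fun u _ =>
    ((continuous_apply u).continuousAt.div hsum hw).smul continuousAt_const

theorem tendsto_weightedAverage_update [DecidableEq ι] {α : Type*} {l : Filter α} {f : α → 𝕜}
    (hf : Tendsto f l (𝓝 0)) {c : ι → 𝕜} {t : ι} (hc : ∑ v ∈ univ.erase t, c v ≠ 0)
    (V : ι → E) :
    Tendsto (fun x => weightedAverage (Function.update c t (f x)) V) l
      (𝓝 (∑ u ∈ univ.erase t, (c u / ∑ v ∈ univ.erase t, c v) • V u)) := by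
  rw [← weightedAverage_update_zero]
  refine (continuousAt_weightedAverage ?_ V).tendsto.comp (tendsto_const_nhds.update t hf)
  rwa [sum_update_zero]

end WeightedAverage

/-- As `z t → -∞`, the attention output over `I` converges to the attention
output computed over `I \ {t}`. -/
theorem attention_output_tendsto_masked
    {I : Type*} [Fintype I] [DecidableEq I] {d : ℕ}
    (t : I) (z : I → ℝ) (V : I → EuclideanSpace ℝ (Fin d))
    (hNonempty : (Finset.univ.erase t).Nonempty) :
    Tendsto
      (fun x : ℝ =>
        ∑ u : I,
          (Real.exp (if u = t then x else z u) /
            ∑ v : I, Real.exp (if v = t then x else z v)) • V u)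
      atBot
      (nhds (∑ u ∈ Finset.univ.erase t,
        (Real.exp (z u) / ∑ v ∈ Finset.univ.erase t, Real.exp (z v)) • V u)) := by
  have hpos : 0 < ∑ v ∈ univ.erase t, Real.exp (z v) := sum_pos (fun v _ => exp_pos _) hNonempty
  convert tendsto_weightedAverage_update tendsto_exp_atBot hpos.ne' V using 2 with x
  simp only [weightedAverage, Function.update_apply, apply_ite Real.exp]
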